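/- Let A be a commutative ring, L a Gabriel filter on A, M an A-module and T ⊆ M a totally σ-torsion submodule. Then M is totally σ-artinian if, and only if, M/T is totally σ-artinian. -/

import Mathlib

/-!
Submodule chains can be transported along `M → M ⧸ T` in both directions: pulling a chain of
`M ⧸ T` back to `M` shows that quotients of totally σ-artinian modules are totally σ-artinian.
Conversely, pushing a chain `N` of `M` forward only gives `h • Nₘ ≤ Nₛ ⊔ T`; multiplying by an
ideal `h₀ ∈ L` killing `T` removes the error term, and `h₀ * h ∈ L` by the Gabriel condition.
-/

/-- A Gabriel filter on a commutative ring `A`: a set of ideals containing `⊤`,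
upward closed, closed under intersections, and satisfying the Gabriel condition. -/
structure IsGabrielFilter {A : Type*} [CommRing A] (L : Set (Ideal A)) : Prop where
  top_mem : ⊤ ∈ L
  mem_of_le : ∀ {a b : Ideal A}, a ∈ L → a ≤ b → b ∈ L
  inf_mem : ∀ {a b : Ideal A}, a ∈ L → b ∈ L → a ⊓ b ∈ L
  gabriel : ∀ b : Ideal A,
    (∃ a ∈ L, ∀ x ∈ a, Submodule.colon b (Ideal.span {x}) ∈ L) → b ∈ L

/-- An `A`-module `M` is totally σ-artinian w.r.t. `L` if every decreasing chain
of submodules `N₁ ⊇ N₂ ⊇ ⋯` admits `m` and `h ∈ L` with `Nₘ·h ⊆ Nₛ` for all `s ≥ m`. -/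
def TotallySigmaArtinian {A : Type*} [CommRing A] (L : Set (Ideal A))
    (M : Type*) [AddCommGroup M] [Module A M] : Prop :=
  ∀ N : ℕ → Submodule A M, Antitone N →
    ∃ m : ℕ, ∃ h ∈ L, ∀ s : ℕ, m ≤ s → h • N m ≤ N s

lemma IsGabrielFilter.mul_mem {A : Type*} [CommRing A] {L : Set (Ideal A)}
    (hL : IsGabrielFilter L) {a b : Ideal A} (ha : a ∈ L) (hb : b ∈ L) :
    a * b ∈ L := by
  refine hL.gabriel _ ⟨a, ha, fun x hx => hL.mem_of_le hb fun y hy => ?_⟩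
  rw [Submodule.mem_colon]
  rintro _ hp
  obtain ⟨c, rfl⟩ := Ideal.mem_span_singleton.mp hp
  rw [smul_eq_mul, show y * (x * c) = x * y * c by ring]
  exact Ideal.mul_mem_right _ _ (Ideal.mul_mem_mul hx hy)

lemma Submodule.smul_le_of_le_sup_of_smul_eq_bot {A M : Type*} [CommRing A] [AddCommGroup M]
    [Module A M] {I J : Ideal A} {P Q T : Submodule A M} (hT : J • T = ⊥) (hP : I • P ≤ Q ⊔ T) :
    (J * I) • P ≤ Q :=
  calc (J * I) • P = J • (I • P) := mul_smul J I P
    _ ≤ J • (Q ⊔ T) := smul_mono_right J hP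
    _ = J • Q := by rw [Submodule.smul_sup, hT, sup_bot_eq]
    _ ≤ Q := Submodule.smul_le_right

namespace TotallySigmaArtinian

variable {A : Type*} [CommRing A] {L : Set (Ideal A)}
  {M M₂ : Type*} [AddCommGroup M] [Module A M] [AddCommGroup M₂] [Module A M₂]

lemma of_surjective (H : TotallySigmaArtinian L M) (f : M →ₗ[A] M₂)
    (hf : Function.Surjective f) : TotallySigmaArtinian L M₂ := by
  intro N hN
  obtain ⟨m, h, hh, hle⟩ := H (fun n => (N n).comap f) fun i j hij => Submodule.comap_mono (hN hij)
  refine ⟨m, h, hh, fun s hs => ?_⟩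
  calc h • N m = (h • (N m).comap f).map f := by
        rw [Submodule.map_smul'', Submodule.map_comap_eq_of_surjective hf]
    _ ≤ ((N s).comap f).map f := Submodule.map_mono (hle s hs)
    _ = N s := Submodule.map_comap_eq_of_surjective hf _

lemma of_smul_ker_eq_bot (hL : IsGabrielFilter L) (H : TotallySigmaArtinian L M₂)
    (f : M →ₗ[A] M₂) (hker : ∃ h ∈ L, h • LinearMap.ker f = ⊥) : TotallySigmaArtinian L M := by
  obtain ⟨h₀, h₀L, h₀ker⟩ := hker
  intro N hN
  obtain ⟨m, h, hh, hle⟩ := H (fun n => (N n).map f) fun i j hij => Submodule.map_mono (hN hij)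
  refine ⟨m, h₀ * h, hL.mul_mem h₀L hh, fun s hs => ?_⟩
  have hsup : h • N m ≤ N s ⊔ LinearMap.ker f := by
    rw [← LinearMap.map_le_map_iff, Submodule.map_smul'']
    exact hle s hs
  exact Submodule.smul_le_of_le_sup_of_smul_eq_bot h₀ker hsup

end TotallySigmaArtinian

theorem totallySigmaArtinian_iff_quotient_by_totallyTorsion
    {A : Type*} [CommRing A] (L : Set (Ideal A)) (hL : IsGabrielFilter L)
    (M : Type*) [AddCommGroup M] [Module A M]
    (T : Submodule A M) (hT : ∃ h ∈ L, h • T = ⊥) :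
    TotallySigmaArtinian L M ↔ TotallySigmaArtinian L (M ⧸ T) :=
  ⟨fun H => H.of_surjective T.mkQ T.mkQ_surjective,
    fun H => H.of_smul_ker_eq_bot hL T.mkQ (by rwa [Submodule.ker_mkQ])⟩
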